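/- Let t be a k-ary tree, L a 0-homogeneous tree language, b ∈ Σ₀, and α = b. Then b⁻¹(t ·_b L) = (b⁻¹(t) ·_b L) ∘₁ b⁻¹(L), where ∘₁ denotes partial composition at the first ε-position. -/

import Mathlib

inductive GTree (S : Type) (ar : S → ℕ) : Type where
  | eps (x : ℕ) : GTree S ar
  | node (f : S) (ts : Fin (ar f) → GTree S ar) : GTree S ar

namespace GTree

variable {S : Type} {ar : S → ℕ}

/-- Substitute each ε-symbol `ε_x` by `σ x`. -/
def subst (σ : ℕ → GTree S ar) : GTree S ar → GTree S ar
  | eps x => σ x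
  | node f ts => node f (fun i => subst σ (ts i))

/-- The multiset of ε-indices of a tree. -/
def epsIdx : GTree S ar → Multiset ℕ
  | eps x => {x}
  | node _ ts => ∑ i, epsIdx (ts i)

/-- `Inc_ε(z,t)`: increment every ε-index by `z`. -/
def inc (z : ℕ) (t : GTree S ar) : GTree S ar :=
  subst (fun x => eps (x + z)) t

/-- Composition `t ∘ (t₁,…,t_k)`: graft `ts_j` at the `j`-th smallest ε-index of `t`. -/
def compo (t : GTree S ar) (ts : List (GTree S ar)) : GTree S ar :=
  subst (fun x => ts.getD ((Multiset.sort (epsIdx t) (· ≤ ·)).idxOf x) (eps x)) t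

/-- The tree `α(ε₁,…,ε_k)` associated with a symbol `α`. -/
def symTree (f : S) : GTree S ar := node f (fun i => eps (i.1 + 1))

/-- Bottom-up quotient `d⁻¹(t)` of a tree `t` w.r.t. a tree `d`. -/
def quotT (d t : GTree S ar) : Set (GTree S ar) :=
  { u | epsIdx u = 1 ::ₘ (epsIdx t - epsIdx d).map (· + 1) ∧
        subst (fun j => if j = 1 then d else eps (j - 1)) u = t }

/-- Bottom-up quotient `d⁻¹(L)` of a language w.r.t. a tree. -/
def quotL (d : GTree S ar) (L : Set (GTree S ar)) : Set (GTree S ar) :=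
  ⋃ t ∈ L, quotT d t

def incL (z : ℕ) (L : Set (GTree S ar)) : Set (GTree S ar) := inc z '' L

/-- Composition of languages `L ∘ (L₁,…,L_k)`. -/
def compoL (L : Set (GTree S ar)) (Ls : List (Set (GTree S ar))) : Set (GTree S ar) :=
  { u | ∃ t ∈ L, ∃ ts : List (GTree S ar), List.Forall₂ (· ∈ ·) ts Ls ∧ u = compo t ts }

/-- Partial composition `t ∘₁ L'` at the first (smallest) ε-index. -/
def pcomp (t : GTree S ar) (L' : Set (GTree S ar)) : Set (GTree S ar) :=
  { u | ∃ t' ∈ L', u = compo t (t' :: ((Multiset.sort (epsIdx t) (· ≤ ·)).tail).map eps) }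

/-- Partial composition of languages `L ∘₁ L'`. -/
def pcompL (L L' : Set (GTree S ar)) : Set (GTree S ar) := ⋃ t ∈ L, pcomp t L'

/-- Tree substitution `t_{b ← L}` of the 0-ary symbol `b` by the language `L`. -/
def bsub [DecidableEq S] (b : S) (L : Set (GTree S ar)) : GTree S ar → Set (GTree S ar)
  | eps x => {eps x}
  | node f ts =>
      if f = b then L
      else { u | ∃ us : Fin (ar f) → GTree S ar, (∀ i, us i ∈ bsub b L (ts i)) ∧ u = node f us }

/-- `b`-product `L₁ ·_b L₂`. -/
def prodB [DecidableEq S] (L₁ : Set (GTree S ar)) (b : S) (L₂ : Set (GTree S ar)) :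
    Set (GTree S ar) :=
  ⋃ t ∈ L₁, bsub b L₂ t

/-- Iterated `b`-product `L^{n_b}`. -/
def iterB [DecidableEq S] (b : S) (L : Set (GTree S ar)) : ℕ → Set (GTree S ar)
  | 0 => {symTree b}
  | n + 1 => iterB b L n ∪ prodB L b (iterB b L n)

/-- `b`-closure `L^{*_b}`. -/
def closB [DecidableEq S] (b : S) (L : Set (GTree S ar)) : Set (GTree S ar) :=
  ⋃ n, iterB b L n

/-- Iterated composition `L^{n∘}` of a 1-homogeneous language of ε-index `{x}`. -/
def iterC (x : ℕ) (L : Set (GTree S ar)) : ℕ → Set (GTree S ar)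
  | 0 => {eps x}
  | n + 1 => iterC x L n ∪ pcompL (iterC x L n) L

/-- Composition closure `L^⊛`. -/
def closC (x : ℕ) (L : Set (GTree S ar)) : Set (GTree S ar) := ⋃ n, iterC x L n

end GTree


namespace GTree
variable {S : Type} {ar : S → ℕ}

theorem mem_epsIdx_node {f : S} {ts : Fin (ar f) → GTree S ar} {x : ℕ} :
    x ∈ epsIdx (node f ts) ↔ ∃ i, x ∈ epsIdx (ts i) := by
  simp [epsIdx, Multiset.mem_sum]

theorem subst_congr {σ τ : ℕ → GTree S ar} {t : GTree S ar}
    (h : ∀ x ∈ epsIdx t, σ x = τ x) : subst σ t = subst τ t := by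
  induction t with
  | eps x => exact h x (by simp [epsIdx])
  | node f ts ih =>
      simp only [subst, node.injEq, heq_eq_eq, true_and]
      funext i
      exact ih i fun x hx => h x (mem_epsIdx_node.2 ⟨i, hx⟩)

theorem subst_subst (σ τ : ℕ → GTree S ar) (t : GTree S ar) :
    subst σ (subst τ t) = subst (fun x => subst σ (τ x)) t := by
  induction t with
  | eps x => rfl
  | node f ts ih => simp only [subst, node.injEq, heq_eq_eq, true_and]; funext i; exact ih i

theorem subst_eps (t : GTree S ar) : subst eps t = t := by
  induction t with
  | eps x => rfl
  | node f ts ih => simp only [subst, node.injEq, heq_eq_eq, true_and]; funext i; exact ih i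

theorem sum_bind' {ι : Type*} (s : Finset ι) (f : ι → Multiset ℕ) (g : ℕ → Multiset ℕ) :
    (∑ i ∈ s, f i).bind g = ∑ i ∈ s, (f i).bind g := by
  classical
  induction s using Finset.induction with
  | empty => simp
  | insert _ _ h ih => simp [Finset.sum_insert h, Multiset.add_bind, ih]

theorem epsIdx_subst (σ : ℕ → GTree S ar) (t : GTree S ar) :
    epsIdx (subst σ t) = (epsIdx t).bind (fun x => epsIdx (σ x)) := by
  induction t with
  | eps x => simp [subst, epsIdx]
  | node f ts ih =>
      simp only [subst, epsIdx]
      rw [sum_bind']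
      exact Finset.sum_congr rfl fun i _ => ih i

theorem subst_of_epsIdx_zero {σ : ℕ → GTree S ar} {t : GTree S ar}
    (h : epsIdx t = 0) : subst σ t = t := by
  rw [subst_congr (τ := eps) (fun x hx => by rw [h] at hx; exact absurd hx (Multiset.notMem_zero x)),
    subst_eps]

end GTree
namespace GTree
set_option linter.unusedSectionVars false
variable {S : Type} {ar : S → ℕ} [DecidableEq S]

/-- The substitution used in the bottom-up quotient. -/
def qs (b : S) (j : ℕ) : GTree S ar := if j = 1 then symTree b else eps (j - 1)

theorem epsIdx_symTree {b : S} (hb : ar b = 0) : epsIdx (symTree b : GTree S ar) = 0 := by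
  simp only [symTree, epsIdx]
  exact Finset.sum_eq_zero fun i _ => absurd i.isLt (by omega)

theorem node_ar_zero {b : S} (hb : ar b = 0) (ts ts' : Fin (ar b) → GTree S ar) :
    node b ts = node b ts' := by
  congr 1; funext i; exact absurd i.isLt (by omega)

theorem mem_quotT {b : S} (hb : ar b = 0) {t u : GTree S ar} :
    u ∈ quotT (symTree b) t ↔
      epsIdx u = 1 ::ₘ (epsIdx t).map (· + 1) ∧ subst (qs b) u = t := by
  simp only [quotT, Set.mem_setOf_eq, epsIdx_symTree hb, Multiset.sub_zero]
  exact Iff.rfl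

theorem epsIdx_bsub {b : S} (hb : ar b = 0) {L : Set (GTree S ar)}
    (hL : ∀ u ∈ L, epsIdx u = 0) :
    ∀ {t s : GTree S ar}, s ∈ bsub b L t → epsIdx s = epsIdx t := by
  intro t
  induction t with
  | eps x => intro s hs; rw [Set.eq_of_mem_singleton hs]
  | node f ts ih =>
      intro s hs
      by_cases hf : f = b
      · subst hf
        rw [bsub, if_pos rfl] at hs
        rw [hL s hs]
        exact (Finset.sum_eq_zero fun i _ => absurd i.isLt (by omega)).symm
      · rw [bsub, if_neg hf] at hs
        obtain ⟨us, hus, rfl⟩ := hs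
        simp only [epsIdx]
        exact Finset.sum_congr rfl fun i _ => ih i (hus i)

theorem bsub_subst {b : S} {L : Set (GTree S ar)} (hL : ∀ u ∈ L, epsIdx u = 0)
    {σ τ : ℕ → GTree S ar} (hστ : ∀ x, τ x ∈ bsub b L (σ x)) :
    ∀ {w v : GTree S ar}, v ∈ bsub b L w → subst τ v ∈ bsub b L (subst σ w) := by
  intro w
  induction w with
  | eps x =>
      intro v hv
      rw [Set.eq_of_mem_singleton hv]
      exact hστ x
  | node f ws ih =>
      intro v hv
      by_cases hf : f = b
      · subst hf
        rw [bsub, if_pos rfl] at hv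
        rw [subst_of_epsIdx_zero (hL v hv)]
        simp only [subst]
        rw [bsub, if_pos rfl]
        exact hv
      · rw [bsub, if_neg hf] at hv
        obtain ⟨us, hus, rfl⟩ := hv
        simp only [subst]
        rw [bsub, if_neg hf]
        exact ⟨fun i => subst τ (us i), fun i => ih i (hus i), rfl⟩

theorem quotT_empty {b : S} (hb : ar b = 0) {s : GTree S ar} (h0 : 0 ∈ epsIdx s) :
    quotT (symTree b) s = ∅ := by
  ext u
  simp only [Set.mem_empty_iff_false, iff_false]
  intro hu
  obtain ⟨he, hs⟩ := (mem_quotT hb).1 hu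
  rw [← hs, epsIdx_subst] at h0
  obtain ⟨x, hx, hx0⟩ := Multiset.mem_bind.1 h0
  simp only [qs] at hx0
  split at hx0
  · rw [epsIdx_symTree hb] at hx0; exact Multiset.notMem_zero 0 hx0
  · next hx1 =>
      rw [epsIdx, Multiset.mem_singleton] at hx0
      have : x = 0 := by omega
      subst this
      rw [he, Multiset.mem_cons] at hx
      rcases hx with h | h
      · exact absurd h (by omega)
      · obtain ⟨y, _, hy⟩ := Multiset.mem_map.1 h
        omega

end GTree
namespace GTree
variable {S : Type} {ar : S → ℕ} [DecidableEq S]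

theorem compo_eq {v t' : GTree S ar} {N : Multiset ℕ}
    (he : epsIdx v = 1 ::ₘ N) (hN : ∀ x ∈ N, 1 ≤ x) :
    compo v (t' :: ((Multiset.sort (epsIdx v) (· ≤ ·)).tail).map eps) =
      subst (fun x => if x = 1 then t' else eps x) v := by
  apply subst_congr
  intro x hx
  set ℓ := Multiset.sort (epsIdx v) (· ≤ ·) with hℓ
  have h1 : 1 ∈ ℓ := (Multiset.mem_sort _).2 (by rw [he]; exact Multiset.mem_cons_self ..)
  have hall : ∀ y ∈ ℓ, 1 ≤ y := by
    intro y hy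
    have := (Multiset.mem_sort _).1 hy
    rw [he, Multiset.mem_cons] at this
    rcases this with h | h
    · omega
    · exact hN y h
  have hsort : ℓ.Pairwise (· ≤ ·) := Multiset.pairwise_sort _ _
  have hxl : x ∈ ℓ := (Multiset.mem_sort _).2 (by rw [he] at hx ⊢; exact hx)
  obtain ⟨a, tl, hcons⟩ : ∃ a tl, ℓ = a :: tl :=
    List.exists_cons_of_ne_nil (List.ne_nil_of_mem h1)
  show (t' :: (ℓ.tail).map eps).getD (ℓ.idxOf x) (eps x) = if x = 1 then t' else eps x
  rw [hcons] at h1 hall hsort hxl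
  rw [List.pairwise_cons] at hsort
  have ha : a = 1 := by
    rcases List.mem_cons.1 h1 with h | h
    · omega
    · have := hsort.1 1 h
      have := hall a List.mem_cons_self
      omega
  subst ha
  by_cases hx1 : x = 1
  · subst hx1
    rw [hcons, List.idxOf_cons_self, List.tail_cons, List.getD_cons_zero, if_pos rfl]
  · have hxtl : x ∈ tl := by
      rcases List.mem_cons.1 hxl with h | h
      · exact absurd h hx1
      · exact h
    have hlt : tl.idxOf x < tl.length := List.idxOf_lt_length_iff.2 hxtl
    rw [hcons, List.idxOf_cons_ne tl (Ne.symm hx1), List.tail_cons]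
    rw [if_neg hx1]
    show (t' :: tl.map eps).getD (tl.idxOf x).succ (eps x) = eps x
    rw [List.getD_cons_succ, List.getD_eq_getElem _ _ (by simpa using hlt)]
    simp only [List.getElem_map, List.getElem_idxOf]

theorem mem_rhs {b : S} (hb : ar b = 0) {L : Set (GTree S ar)}
    (hL : ∀ u ∈ L, epsIdx u = 0) {t u : GTree S ar} :
    u ∈ pcompL (prodB (quotT (symTree b) t) b L) (quotL (symTree b) L) ↔
      ∃ w, ((epsIdx w = 1 ::ₘ (epsIdx t).map (· + 1) ∧ subst (qs b) w = t) ∧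
        ∃ v ∈ bsub b L w, ∃ t', (∃ l ∈ L, epsIdx t' = {1} ∧ subst (qs b) t' = l) ∧
          u = subst (fun x => if x = 1 then t' else eps x) v) := by
  have hN : ∀ x ∈ (epsIdx t).map (· + 1), 1 ≤ x := by
    intro x hx
    obtain ⟨y, _, hy⟩ := Multiset.mem_map.1 hx
    omega
  constructor
  · rintro hu
    obtain ⟨v, hv, hu⟩ := Set.mem_iUnion₂.1 hu
    obtain ⟨w, hw, hv⟩ := Set.mem_iUnion₂.1 hv
    obtain ⟨hw1, hw2⟩ := (mem_quotT hb).1 hw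
    obtain ⟨t', ht', rfl⟩ := hu
    obtain ⟨l, hl, ht'⟩ := Set.mem_iUnion₂.1 ht'
    obtain ⟨ht'1, ht'2⟩ := (mem_quotT hb).1 ht'
    rw [hL l hl, Multiset.map_zero, Multiset.cons_zero] at ht'1
    have hev : epsIdx v = 1 ::ₘ (epsIdx t).map (· + 1) := by
      rw [epsIdx_bsub hb hL hv, hw1]
    refine ⟨w, ⟨hw1, hw2⟩, v, hv, t', ⟨l, hl, ht'1, ht'2⟩, ?_⟩
    rw [compo_eq hev hN]
  · rintro ⟨w, ⟨hw1, hw2⟩, v, hv, t', ⟨l, hl, ht'1, ht'2⟩, rfl⟩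
    have hev : epsIdx v = 1 ::ₘ (epsIdx t).map (· + 1) := by
      rw [epsIdx_bsub hb hL hv, hw1]
    apply Set.mem_iUnion₂.2
    refine ⟨v, Set.mem_iUnion₂.2 ⟨w, (mem_quotT hb).2 ⟨hw1, hw2⟩, hv⟩, ?_⟩
    refine ⟨t', Set.mem_iUnion₂.2 ⟨l, hl, (mem_quotT hb).2 ⟨?_, ht'2⟩⟩, ?_⟩
    · rw [hL l hl, Multiset.map_zero, Multiset.cons_zero]; exact ht'1
    · rw [compo_eq hev hN]

end GTree
namespace GTree
set_option linter.unusedSectionVars false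
variable {S : Type} {ar : S → ℕ} [DecidableEq S]

theorem sum_map' {ι : Type*} (s : Finset ι) (f : ι → Multiset ℕ) (g : ℕ → ℕ) :
    Multiset.map g (∑ i ∈ s, f i) = ∑ i ∈ s, Multiset.map g (f i) := by
  classical
  induction s using Finset.induction with
  | empty => simp
  | insert _ _ h ih => simp [Finset.sum_insert h, ih]

theorem epsIdx_qs {b : S} (hb : ar b = 0) (x : ℕ) :
    epsIdx (qs b x : GTree S ar) = if x = 1 then 0 else {x - 1} := by
  rw [qs]; split
  · exact epsIdx_symTree hb
  · rfl

theorem epsIdx_inc (t : GTree S ar) : epsIdx (inc 1 t) = (epsIdx t).map (· + 1) := by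
  rw [inc, epsIdx_subst, ← Multiset.bind_singleton (epsIdx t) (· + 1)]
  rfl

theorem qs_inc {b : S} {t : GTree S ar} (h0 : 0 ∉ epsIdx t) :
    subst (qs b) (inc 1 t) = t := by
  rw [inc, subst_subst]
  rw [subst_congr (τ := eps) ?_, subst_eps]
  intro x hx
  have hx0 : x ≠ 0 := fun h => h0 (h ▸ hx)
  have hne : ¬(x + 1 = 1) := by omega
  show subst (qs b) (eps (x + 1)) = eps x
  simp only [subst, qs, if_neg hne]
  congr 1

theorem subst_g_eq {t' y : GTree S ar} (h1 : 1 ∉ epsIdx y) :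
    subst (fun x => if x = 1 then t' else eps x) y = y := by
  rw [subst_congr (τ := eps) fun x hx => if_neg (fun h => h1 (by rw [← h]; exact hx)), subst_eps]

theorem eq_inc_of_qs {b : S} {y s' : GTree S ar} (hq : subst (qs b) y = s')
    (h0 : 0 ∉ epsIdx y) (h1 : 1 ∉ epsIdx y) : y = inc 1 s' := by
  have key : subst (fun x => subst (fun z => eps (z + 1)) (qs b x)) y = y := by
    rw [subst_congr (τ := eps) ?_, subst_eps]
    intro x hx
    have hx0 : x ≠ 0 := fun h => h0 (h ▸ hx)
    have hx1 : x ≠ 1 := fun h => h1 (h ▸ hx)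
    simp only [qs, if_neg hx1, subst]
    congr 1
    omega
  rw [← hq, inc, subst_subst, key]

theorem fwd {b : S} (hb : ar b = 0) {L : Set (GTree S ar)}
    (hL : ∀ u ∈ L, epsIdx u = 0) {t : GTree S ar} :
    0 ∉ epsIdx t → ∀ u s : GTree S ar, s ∈ bsub b L t →
      epsIdx u = 1 ::ₘ (epsIdx t).map (· + 1) → subst (qs b) u = s →
      ∃ w, ((epsIdx w = 1 ::ₘ (epsIdx t).map (· + 1) ∧ subst (qs b) w = t) ∧
        ∃ v ∈ bsub b L w, ∃ t', (∃ l ∈ L, epsIdx t' = {1} ∧ subst (qs b) t' = l) ∧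
          u = subst (fun x => if x = 1 then t' else eps x) v) := by
  induction t with
  | eps x =>
      intro h0 u s hs hu hqu
      exfalso
      rw [bsub] at hs
      cases u with
      | eps j =>
          have := congrArg Multiset.card hu
          simp [epsIdx] at this
      | node g us =>
          simp only [subst] at hqu
          rw [Set.eq_of_mem_singleton hs] at hqu
          cases hqu
  | node f ts ih =>
      intro h0 u s hs hu hqu
      by_cases hf : f = b
      · have harf : ar f = 0 := hf ▸ hb
        rw [bsub, if_pos hf] at hs
        have hz : epsIdx (node f ts) = 0 :=
          Finset.sum_eq_zero fun i _ => absurd i.isLt (by omega)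
        rw [hz, Multiset.map_zero, Multiset.cons_zero] at hu
        refine ⟨eps 1, ⟨?_, ?_⟩, eps 1, rfl, u, ⟨s, hs, hu, hqu⟩, ?_⟩
        · rw [hz, Multiset.map_zero, Multiset.cons_zero]; rfl
        · show qs b 1 = node f ts
          rw [qs, if_pos rfl]
          subst hf
          exact node_ar_zero hb _ ts
        · show u = subst _ (eps 1)
          simp [subst]
      · rw [bsub, if_neg hf] at hs
        obtain ⟨ss, hss, rfl⟩ := hs
        cases u with
        | eps j =>
            exfalso
            simp only [subst, qs] at hqu
            split at hqu
            · exact hf (by injection hqu with h _; exact h.symm)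
            · cases hqu
        | node g us =>
            simp only [subst] at hqu
            injection hqu with hgf hus
            subst hgf
            have hus' : ∀ i, subst (qs b) (us i) = ss i := congrFun (eq_of_heq hus)
            have hMss : ∀ i, epsIdx (ss i) = epsIdx (ts i) := fun i => epsIdx_bsub hb hL (hss i)
            have hbind : ∀ i, epsIdx (ts i) =
                (epsIdx (us i)).bind (fun x => epsIdx (qs b x : GTree S ar)) := fun i => by
              rw [← hMss i, ← hus' i, epsIdx_subst]
            have h0i : ∀ i, 0 ∉ epsIdx (ts i) := fun i hi => h0 (mem_epsIdx_node.2 ⟨i, hi⟩)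
            simp only [epsIdx] at hu
            rw [sum_map'] at hu
            have h0u : ∀ i, 0 ∉ epsIdx (us i) := by
              intro i hi
              have hmem : (0 : ℕ) ∈ ∑ i, epsIdx (us i) :=
                Multiset.mem_sum.2 ⟨i, Finset.mem_univ i, hi⟩
              rw [hu] at hmem
              rcases Multiset.mem_cons.1 hmem with h | h
              · exact absurd h (by omega)
              · obtain ⟨j, _, hj⟩ := Multiset.mem_sum.1 h
                obtain ⟨y, _, hy⟩ := Multiset.mem_map.1 hj
                omega
            have hcount : ∑ i, Multiset.count 1 (epsIdx (us i)) = 1 := by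
              rw [← Multiset.count_sum', hu, Multiset.count_cons_self]
              have hz : Multiset.count 1 (∑ i, (epsIdx (ts i)).map (· + 1)) = 0 := by
                rw [Multiset.count_eq_zero]
                intro hmem
                obtain ⟨j, _, hj⟩ := Multiset.mem_sum.1 hmem
                obtain ⟨y, hy, hy1⟩ := Multiset.mem_map.1 hj
                have : y = 0 := by omega
                exact h0i j (this ▸ hy)
              omega
            obtain ⟨i₀, hc1, hc0⟩ : ∃ i₀, Multiset.count 1 (epsIdx (us i₀)) = 1 ∧
                ∀ j, j ≠ i₀ → Multiset.count 1 (epsIdx (us j)) = 0 := by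
              obtain ⟨i₀, _, hne⟩ := Finset.exists_ne_zero_of_sum_ne_zero
                (s := Finset.univ) (f := fun i => Multiset.count 1 (epsIdx (us i)))
                (by rw [hcount]; omega)
              have hne' : Multiset.count 1 (epsIdx (us i₀)) ≠ 0 := hne
              have hsplit : Multiset.count 1 (epsIdx (us i₀)) +
                  ∑ x ∈ Finset.univ.erase i₀, Multiset.count 1 (epsIdx (us x)) = 1 := by
                exact (Finset.add_sum_erase _ _ (Finset.mem_univ i₀)).trans hcount
              refine ⟨i₀, by omega, fun j hj => ?_⟩
              have hrest : ∑ x ∈ Finset.univ.erase i₀,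
                  Multiset.count 1 (epsIdx (us x)) = 0 := by omega
              exact (Finset.sum_eq_zero_iff.1 hrest) j
                (Finset.mem_erase.2 ⟨hj, Finset.mem_univ j⟩)
            have hNj : ∀ j, j ≠ i₀ → epsIdx (us j) = (epsIdx (ts j)).map (· + 1) := by
              intro j hj
              have h1j : (1 : ℕ) ∉ epsIdx (us j) := Multiset.count_eq_zero.1 (hc0 j hj)
              have hcong : ∀ x ∈ epsIdx (us j),
                  epsIdx (qs b x : GTree S ar) = ({x - 1} : Multiset ℕ) := fun x hx => by
                rw [epsIdx_qs hb, if_neg (fun h => h1j (by rw [← h]; exact hx))]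
              rw [hbind j, Multiset.bind_congr hcong, Multiset.bind_singleton,
                Multiset.map_map]
              have : Multiset.map ((· + 1) ∘ fun x => x - 1) (epsIdx (us j)) =
                  epsIdx (us j) := by
                have := Multiset.map_congr (f := (· + 1) ∘ fun x => x - 1) (g := id)
                  (rfl : epsIdx (us j) = epsIdx (us j)) (fun x hx => by
                    have hx0 : x ≠ 0 := fun h => h0u j (h ▸ hx)
                    simp only [Function.comp, id]
                    omega)
                rw [this, Multiset.map_id]
              rw [this]
            have hNi : epsIdx (us i₀) = 1 ::ₘ (epsIdx (ts i₀)).map (· + 1) := by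
              have e1 : ∑ i, epsIdx (us i) = epsIdx (us i₀) +
                  ∑ j ∈ Finset.univ.erase i₀, (epsIdx (ts j)).map (· + 1) := by
                rw [← Finset.add_sum_erase Finset.univ _ (Finset.mem_univ i₀)]
                congr 1
                exact Finset.sum_congr rfl fun j hj => hNj j (Finset.mem_erase.1 hj).1
              have e2 : (1 : ℕ) ::ₘ ∑ i, (epsIdx (ts i)).map (· + 1) =
                  (1 ::ₘ (epsIdx (ts i₀)).map (· + 1)) +
                  ∑ j ∈ Finset.univ.erase i₀, (epsIdx (ts j)).map (· + 1) := by
                rw [← Finset.add_sum_erase Finset.univ _ (Finset.mem_univ i₀),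
                  Multiset.cons_add]
              exact add_right_cancel (e1.symm.trans (hu.trans e2))
            obtain ⟨w₀, ⟨hw₀e, hw₀s⟩, v₀, hv₀, t', ht', hu₀⟩ :=
              ih i₀ (h0i i₀) (us i₀) (ss i₀) (hss i₀) hNi (hus' i₀)
            have husj : ∀ j, j ≠ i₀ → us j ∈ bsub b L (inc 1 (ts j)) := by
              intro j hj
              have h1j : (1 : ℕ) ∉ epsIdx (us j) := Multiset.count_eq_zero.1 (hc0 j hj)
              rw [eq_inc_of_qs (hus' j) (h0u j) h1j]
              exact bsub_subst hL (fun x => rfl) (hss j)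
            refine ⟨node g (fun j => if j = i₀ then w₀ else inc 1 (ts j)), ⟨?_, ?_⟩,
              node g (fun j => if j = i₀ then v₀ else us j), ?_, t', ht', ?_⟩
            · show (∑ j, epsIdx (if j = i₀ then w₀ else inc 1 (ts j))) =
                1 ::ₘ (epsIdx (node g ts)).map (· + 1)
              have hrw : ∀ j ∈ Finset.univ.erase i₀,
                  epsIdx (if j = i₀ then w₀ else inc 1 (ts j)) =
                  (epsIdx (ts j)).map (· + 1) := fun j hj => by
                rw [if_neg (Finset.mem_erase.1 hj).1, epsIdx_inc]
              rw [← Finset.add_sum_erase Finset.univ _ (Finset.mem_univ i₀),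
                if_pos rfl, hw₀e, Finset.sum_congr rfl hrw, Multiset.cons_add]
              show _ = 1 ::ₘ Multiset.map _ (∑ i, epsIdx (ts i))
              rw [sum_map',
                ← Finset.add_sum_erase Finset.univ (fun j => (epsIdx (ts j)).map (· + 1))
                  (Finset.mem_univ i₀)]
            · show node g (fun j => subst (qs b) (if j = i₀ then w₀ else inc 1 (ts j))) =
                node g ts
              refine congrArg (node g) (funext fun j => ?_)
              by_cases hj : j = i₀
              · subst hj; rw [if_pos rfl]; exact hw₀s
              · rw [if_neg hj]; exact qs_inc (h0i j)
            · rw [bsub, if_neg hf]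
              refine ⟨_, fun j => ?_, rfl⟩
              by_cases hj : j = i₀
              · subst hj; simp only [if_pos rfl]; exact hv₀
              · simp only [if_neg hj]; exact husj j hj
            · show node g us = node g
                (fun j => subst (fun x => if x = 1 then t' else eps x)
                  (if j = i₀ then v₀ else us j))
              refine congrArg (node g) (funext fun j => ?_)
              by_cases hj : j = i₀
              · subst hj; rw [if_pos rfl]; exact hu₀
              · rw [if_neg hj]
                exact (subst_g_eq (Multiset.count_eq_zero.1 (hc0 j hj))).symm

end GTree
namespace GTree
set_option linter.unusedSectionVars false
variable {S : Type} {ar : S → ℕ} [DecidableEq S]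

theorem bwd {b : S} (hb : ar b = 0) {L : Set (GTree S ar)}
    (hL : ∀ u ∈ L, epsIdx u = 0) {t w v t' l : GTree S ar}
    (h0 : 0 ∉ epsIdx t)
    (hw1 : epsIdx w = 1 ::ₘ (epsIdx t).map (· + 1)) (hw2 : subst (qs b) w = t)
    (hv : v ∈ bsub b L w) (hl : l ∈ L) (ht'1 : epsIdx t' = {1})
    (ht'2 : subst (qs b) t' = l) :
    epsIdx (subst (fun x => if x = 1 then t' else eps x) v) =
        1 ::ₘ (epsIdx t).map (· + 1) ∧
      subst (qs b) (subst (fun x => if x = 1 then t' else eps x) v) ∈ bsub b L t := by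
  have hev : epsIdx v = 1 ::ₘ (epsIdx t).map (· + 1) := by
    rw [epsIdx_bsub hb hL hv, hw1]
  constructor
  · rw [epsIdx_subst, hev, Multiset.cons_bind]
    have h1 : epsIdx ((fun x => if x = 1 then t' else eps x) 1) = {1} := by
      simp only [if_pos rfl]; exact ht'1
    rw [h1]
    have h2 : ((epsIdx t).map (· + 1)).bind
        (fun x => epsIdx ((fun x => if x = 1 then t' else eps x) x)) =
        (epsIdx t).map (· + 1) := by
      rw [Multiset.bind_congr (g := fun x => ({x} : Multiset ℕ)) ?_]
      · rw [Multiset.bind_singleton, Multiset.map_id']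
      · intro x hx
        obtain ⟨y, hy, rfl⟩ := Multiset.mem_map.1 hx
        have hy0 : y ≠ 0 := fun h => h0 (h ▸ hy)
        simp only [if_neg (by omega : ¬(y + 1 = 1))]
        rfl
    rw [h2, Multiset.singleton_add]
  · rw [subst_subst]
    have hfun : (fun x => subst (qs b) (if x = 1 then t' else eps x)) =
        (fun x => if x = 1 then l else qs b x) := by
      funext x
      by_cases hx : x = 1
      · rw [if_pos hx, if_pos hx, ht'2]
      · rw [if_neg hx, if_neg hx]; rfl
    rw [hfun, ← hw2]
    refine bsub_subst hL (fun x => ?_) hv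
    by_cases hx : x = 1
    · subst hx
      rw [if_pos rfl, qs, if_pos rfl, symTree, bsub, if_pos rfl]
      exact hl
    · rw [if_neg hx, qs, if_neg hx]
      rfl

end GTree

open GTree in
/-- `b⁻¹(t ·_b L) = (b⁻¹(t) ·_b L) ∘₁ b⁻¹(L)`. -/
theorem quotient_b_of_bprod {S : Type} {ar : S → ℕ} [DecidableEq S] (b : S)
    (hb : ar b = 0) (t : GTree S ar) (L : Set (GTree S ar))
    (hL : ∀ u ∈ L, epsIdx u = 0) :
    quotL (symTree b) (bsub b L t) =
      pcompL (prodB (quotT (symTree b) t) b L) (quotL (symTree b) L) := by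
  by_cases h0 : 0 ∈ epsIdx t
  · have hLHS : quotL (symTree b) (bsub b L t) = ∅ := by
      apply Set.eq_empty_iff_forall_notMem.2
      intro u hu
      obtain ⟨s, hs, hu⟩ := Set.mem_iUnion₂.1 hu
      rw [quotT_empty hb (by rw [epsIdx_bsub hb hL hs]; exact h0)] at hu
      exact hu
    rw [hLHS, quotT_empty hb h0]
    have hprod : prodB (∅ : Set (GTree S ar)) b L = ∅ := by simp [prodB]
    rw [hprod]
    simp [pcompL]
  · ext u
    rw [mem_rhs hb hL]
    constructor
    · intro hu
      obtain ⟨s, hs, hu⟩ := Set.mem_iUnion₂.1 hu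
      obtain ⟨he, hsu⟩ := (mem_quotT hb).1 hu
      rw [epsIdx_bsub hb hL hs] at he
      exact fwd hb hL h0 u s hs he hsu
    · rintro ⟨w, ⟨hw1, hw2⟩, v, hv, t', ⟨l, hl, ht'1, ht'2⟩, rfl⟩
      obtain ⟨he, hmem⟩ := bwd hb hL h0 hw1 hw2 hv hl ht'1 ht'2
      refine Set.mem_iUnion₂.2 ⟨_, hmem, (mem_quotT hb).2 ⟨?_, rfl⟩⟩
      rw [epsIdx_bsub hb hL hmem]
      exact he
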